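/- Let $\mathrm K$ and $\mathrm K_{\mathrm{aug}}$ denote the MH and augmented MH transition operators restricted to the mean-zero subspaces $L^2_0(\mu)$ and $L^2_0(\nu)$ respectively. Then for all $n \geq 2$: $\|\mathrm K^n\|_{L^2_0(\mu)\to L^2_0(\mu)} \leq \|\mathrm K_{\mathrm{aug}}^{n-1}\|_{L^2_0(\nu)\to L^2_0(\nu)}$ and $\|\mathrm K_{\mathrm{aug}}^n\|_{L^2_0(\nu)\to L^2_0(\nu)} \leq \|\mathrm K^{n-1}\|_{L^2_0(\mu)\to L^2_0(\mu)}$. Moreover, $\|\mathrm K\|_{L^2_0(\mu)\to L^2_0(\mu)} \leq \|\mathrm K_{\mathrm{aug}}\|_{L^2_0(\nu)\to L^2_0(\nu)}$, and the spectral radius of $\mathrm K_{\mathrm{aug}}$ on $L^2_0(\nu)$ is at most $\|\mathrm K\|_{L^2_0(\mu)\to L^2_0(\mu)}$. -/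

import Mathlib

/-!
Put `π = Kernel.id ×ₖ P`, so that `π ∘ₘ μ = ν` and `markovOp π` is the paper's `P̂`, and let `τ`
be the accept–reject kernel `τ (x, y) = α x y • δ_y + (1 - α x y) • δ_x`, whose operator is
`H P̂*`. Then `K = τ ∘ₖ π` and `K_aug = π ∘ₖ τ`. Detailed balance makes the measure `α • ν`
swap-invariant, which gives `τ ∘ₘ ν = μ` and the `μ`-reversibility of `K`. The operators of `π`
and `τ` are therefore mean-preserving `L²`-contractions, and `K ^ (n + 1) = τ ∘ₖ K_aug ^ n ∘ₖ π`,
`K_aug ^ (n + 1) = π ∘ₖ K ^ n ∘ₖ τ` give the comparisons of powers, and with them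
`‖K_aug ^ n‖ ≤ ‖K ^ (n - 1)‖ ≤ ‖K‖ ^ (n - 1)`.

For `‖K‖ ≤ ‖K_aug‖`, reversibility makes `K` self-adjoint, so by Cauchy–Schwarz the norms
`a k = ‖K ^ k f‖` satisfy `a (k + 1) ^ 2 ≤ a k * a (k + 2)`. Hence
`a 1 ^ (n + 1) ≤ a 0 ^ n * a (n + 1) ≤ a 0 ^ n * ‖K_aug‖ ^ n * a 0` for all `n`, and letting
`n → ∞` gives `a 1 ≤ ‖K_aug‖ * a 0`.
-/

open MeasureTheory ProbabilityTheory ENNReal Filter Topology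

lemma le_of_forall_pow_succ_le_pow_mul {x y z : ℝ} (hx : 0 ≤ x) (hy : 0 ≤ y)
    (h : ∀ n, 1 ≤ n → x ^ (n + 1) ≤ y ^ n * z) : x ≤ y := by
  by_contra! hxy
  have hx0 : 0 < x := hy.trans_lt hxy
  have hlim : Tendsto (fun n : ℕ ↦ (y / x) ^ n * z) atTop (𝓝 0) := by
    simpa using (tendsto_pow_atTop_nhds_zero_of_lt_one (div_nonneg hy hx)
      ((div_lt_one hx0).2 hxy)).mul_const z
  have : x ≤ 0 := ge_of_tendsto hlim (eventually_atTop.2 ⟨1, fun n hn ↦ ?_⟩)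
  · linarith
  rw [div_pow, div_mul_eq_mul_div, le_div_iff₀ (pow_pos hx0 n), ← pow_succ']
  exact h n hn

lemma pow_succ_le_pow_mul_of_sq_le_mul {a : ℕ → ℝ} (ha : ∀ k, 0 ≤ a k)
    (h : ∀ k, a (k + 1) ^ 2 ≤ a k * a (k + 2)) (n : ℕ) :
    a 1 ^ (n + 1) ≤ a 0 ^ n * a (n + 1) := by
  have hratio : ∀ k, a 1 * a (k + 1) ≤ a 0 * a (k + 2) := by
    intro k
    induction k with
    | zero => simpa [sq] using h 0
    | succ k ih =>
      rcases (ha (k + 2)).eq_or_lt with h0 | hpos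
      · rw [← h0, mul_zero]
        exact mul_nonneg (ha 0) (ha _)
      · refine le_of_mul_le_mul_left ?_ hpos
        nlinarith [mul_le_mul_of_nonneg_left (h (k + 1)) (ha 1),
          mul_le_mul_of_nonneg_right ih (ha (k + 3))]
  induction n with
  | zero => simp
  | succ n ih =>
    calc a 1 ^ (n + 2) = a 1 ^ (n + 1) * a 1 := pow_succ _ _
      _ ≤ a 0 ^ n * a (n + 1) * a 1 := by gcongr; exact ha 1
      _ = a 0 ^ n * (a 1 * a (n + 1)) := by ring
      _ ≤ a 0 ^ n * (a 0 * a (n + 2)) := mul_le_mul_of_nonneg_left (hratio n) (pow_nonneg (ha 0) n)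
      _ = a 0 ^ (n + 1) * a (n + 2) := by ring

lemma le_mul_of_sq_le_mul_of_le_pow_mul {a : ℕ → ℝ} {c : ℝ} (ha : ∀ k, 0 ≤ a k) (hc : 0 ≤ c)
    (hconv : ∀ k, a (k + 1) ^ 2 ≤ a k * a (k + 2)) (hbound : ∀ n, 1 ≤ n → a (n + 1) ≤ c ^ n * a 0) :
    a 1 ≤ c * a 0 := by
  refine le_of_forall_pow_succ_le_pow_mul (z := a 0) (ha 1) (mul_nonneg hc (ha 0)) fun n hn ↦ ?_
  calc a 1 ^ (n + 1) ≤ a 0 ^ n * a (n + 1) := pow_succ_le_pow_mul_of_sq_le_mul ha hconv n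
    _ ≤ a 0 ^ n * (c ^ n * a 0) := mul_le_mul_of_nonneg_left (hbound n hn) (pow_nonneg (ha 0) n)
    _ = (c * a 0) ^ n * a 0 := by ring

section L2

variable {X : Type*} [MeasurableSpace X] {μ : Measure X}

lemma enorm_integral_le_eLpNorm_two [IsProbabilityMeasure μ] (f : X → ℝ) :
    ‖∫ x, f x ∂μ‖ₑ ≤ eLpNorm f 2 μ := by
  by_cases hf : AEStronglyMeasurable f μ
  · calc ‖∫ x, f x ∂μ‖ₑ ≤ ∫⁻ x, ‖f x‖ₑ ∂μ := enorm_integral_le_lintegral_enorm f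
      _ = eLpNorm f 1 μ := eLpNorm_one_eq_lintegral_enorm.symm
      _ ≤ eLpNorm f 2 μ := eLpNorm_le_eLpNorm_of_exponent_le one_le_two hf
  · simp [integral_non_aestronglyMeasurable hf]

lemma eLpNorm_two_rpow_two (f : X → ℝ) (μ : Measure X) :
    eLpNorm f 2 μ ^ (2 : ℝ) = ∫⁻ x, ‖f x‖ₑ ^ (2 : ℝ) ∂μ := by
  simpa using eLpNorm_nnreal_pow_eq_lintegral (f := f) (μ := μ) (p := 2) two_ne_zero

lemma MemLp.inner_toLp_eq_integral_mul {u v : X → ℝ} (hu : MemLp u 2 μ) (hv : MemLp v 2 μ) :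
    inner ℝ (hu.toLp u) (hv.toLp v) = ∫ x, u x * v x ∂μ := by
  rw [L2.inner_def]
  refine integral_congr_ae ?_
  filter_upwards [hu.coeFn_toLp, hv.coeFn_toLp] with x hux hvx
  simp [hux, hvx, mul_comm]

end L2

namespace ProbabilityTheory.Kernel

variable {X Y : Type*} [MeasurableSpace X] [MeasurableSpace Y]

noncomputable def markovOp (κ : Kernel X Y) (f : Y → ℝ) (x : X) : ℝ := ∫ y, f y ∂κ x

section MarkovOp

variable {κ : Kernel X Y} {μ : Measure X} {ν : Measure Y} {f g : Y → ℝ}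

lemma markovOp_congr_ae (hκ : κ ∘ₘ μ = ν) (h : f =ᵐ[ν] g) :
    markovOp κ f =ᵐ[μ] markovOp κ g := by
  subst hκ
  filter_upwards [Measure.ae_ae_of_ae_comp h] with x hx using integral_congr_ae hx

lemma aestronglyMeasurable_markovOp (hκ : κ ∘ₘ μ = ν)
    (hf : AEStronglyMeasurable f ν) : AEStronglyMeasurable (markovOp κ f) μ :=
  ⟨markovOp κ (hf.mk f), hf.stronglyMeasurable_mk.integral_kernel,
    markovOp_congr_ae hκ hf.ae_eq_mk⟩

lemma eLpNorm_markovOp_le [IsMarkovKernel κ] (hκ : κ ∘ₘ μ = ν) (hf : AEStronglyMeasurable f ν) :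
    eLpNorm (markovOp κ f) 2 μ ≤ eLpNorm f 2 ν := by
  rw [← ENNReal.rpow_le_rpow_iff two_pos, eLpNorm_two_rpow_two, eLpNorm_two_rpow_two]
  calc ∫⁻ x, ‖markovOp κ f x‖ₑ ^ (2 : ℝ) ∂μ ≤ ∫⁻ x, eLpNorm f 2 (κ x) ^ (2 : ℝ) ∂μ :=
        lintegral_mono fun x ↦ by gcongr; exact enorm_integral_le_eLpNorm_two f
    _ = ∫⁻ y, ‖f y‖ₑ ^ (2 : ℝ) ∂ν := by
        simp_rw [eLpNorm_two_rpow_two, ← hκ]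
        exact (Measure.lintegral_bind κ.aemeasurable (hκ ▸ hf.enorm.pow_const _)).symm

lemma memLp_markovOp [IsMarkovKernel κ] (hκ : κ ∘ₘ μ = ν) (hf : MemLp f 2 ν) :
    MemLp (markovOp κ f) 2 μ :=
  ⟨aestronglyMeasurable_markovOp hκ hf.1, (eLpNorm_markovOp_le hκ hf.1).trans_lt hf.2⟩

lemma integral_markovOp (hκ : κ ∘ₘ μ = ν) (hf : Integrable f ν) :
    ∫ x, markovOp κ f x ∂μ = ∫ y, f y ∂ν := by
  subst hκ
  rw [Measure.comp_eq_comp_const_apply] at hf ⊢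
  rw [Kernel.integral_comp hf]
  simp [markovOp]

lemma markovOp_comp_ae {Z : Type*} [MeasurableSpace Z] {η : Kernel Y Z} {φ : Z → ℝ}
    (hφ : Integrable φ ((η ∘ₖ κ) ∘ₘ μ)) :
    markovOp (η ∘ₖ κ) φ =ᵐ[μ] markovOp κ (markovOp η φ) := by
  filter_upwards [((Measure.integrable_comp_iff hφ.1).1 hφ).1] with x hx
    using Kernel.integral_comp hx

end MarkovOp

section Endo

variable {κ : Kernel X X} {μ : Measure X}

def NormOnMeanZeroLE (κ : Kernel X X) (μ : Measure X) (c : ℝ≥0∞) : Prop :=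
  ∀ f : X → ℝ, MemLp f 2 μ → ∫ x, f x ∂μ = 0 → eLpNorm (markovOp κ f) 2 μ ≤ c * eLpNorm f 2 μ

lemma eq_pow_of_succ_eq_comp {KS : ℕ → Kernel X X} (h1 : KS 1 = κ)
    (hs : ∀ n, 1 ≤ n → KS (n + 1) = κ ∘ₖ KS n) (n : ℕ) (hn : 1 ≤ n) : KS n = κ ^ n := by
  induction n, hn using Nat.le_induction with
  | base => rw [h1, pow_one]
  | succ n hn ih => rw [hs n hn, ih, pow_succ']; rfl

instance isMarkovKernel_pow [IsMarkovKernel κ] (n : ℕ) : IsMarkovKernel (κ ^ n) := by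
  induction n with
  | zero => rw [pow_zero]; exact inferInstanceAs (IsMarkovKernel Kernel.id)
  | succ n ih => rw [pow_succ']; exact IsMarkovKernel.comp κ (κ ^ n)

lemma Invariant.pow (h : Invariant κ μ) (n : ℕ) : Invariant (κ ^ n) μ := by
  induction n with
  | zero => exact Measure.id_comp
  | succ n ih => rw [pow_succ']; exact h.comp ih

lemma comp_pow_succ (π : Kernel X Y) (τ : Kernel Y X) (n : ℕ) :
    (τ ∘ₖ π) ^ (n + 1) = τ ∘ₖ (((π ∘ₖ τ) ^ n) ∘ₖ π) := by
  induction n with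
  | zero => rw [pow_one, pow_zero]; exact congrArg _ (id_comp π).symm
  | succ n ih =>
    rw [pow_succ', ih, pow_succ']
    change (τ ∘ₖ π) ∘ₖ _ = τ ∘ₖ (((π ∘ₖ τ) ∘ₖ _) ∘ₖ π)
    simp only [comp_assoc]

lemma memLp_iterate_markovOp [IsMarkovKernel κ] (h : Invariant κ μ) {f : X → ℝ}
    (hf : MemLp f 2 μ) (n : ℕ) : MemLp ((markovOp κ)^[n] f) 2 μ := by
  induction n with
  | zero => exact hf
  | succ n ih => rw [Function.iterate_succ_apply']; exact memLp_markovOp h.def ih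

lemma markovOp_pow_succ_ae [IsSFiniteKernel κ] (h : Invariant κ μ) {f : X → ℝ}
    (hf : Integrable f μ) (n : ℕ) : markovOp (κ ^ (n + 1)) f =ᵐ[μ] (markovOp κ)^[n + 1] f := by
  induction n with
  | zero => rw [pow_one]; rfl
  | succ n ih =>
    rw [pow_succ, Function.iterate_succ_apply']
    refine (markovOp_comp_ae (κ := κ) (η := κ ^ (n + 1)) ?_).trans (markovOp_congr_ae h.def ih)
    rwa [← Measure.comp_assoc, h.def, (h.pow _).def]

lemma integral_iterate_markovOp [IsMarkovKernel κ] [IsFiniteMeasure μ] (h : Invariant κ μ)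
    {f : X → ℝ} (hf : MemLp f 2 μ) (n : ℕ) :
    ∫ x, (markovOp κ)^[n] f x ∂μ = ∫ x, f x ∂μ := by
  induction n with
  | zero => rfl
  | succ n ih =>
    rw [Function.iterate_succ_apply', integral_markovOp h.def
      ((memLp_iterate_markovOp h hf n).integrable one_le_two), ih]

lemma NormOnMeanZeroLE.pow_succ [IsMarkovKernel κ] [IsProbabilityMeasure μ] {c : ℝ≥0∞}
    (hc : κ.NormOnMeanZeroLE μ c) (h : Invariant κ μ) (n : ℕ) :
    (κ ^ (n + 1)).NormOnMeanZeroLE μ (c ^ (n + 1)) := by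
  intro f hf hf0
  rw [eLpNorm_congr_ae (markovOp_pow_succ_ae h (hf.integrable one_le_two) n)]
  induction n with
  | zero => simpa using hc f hf hf0
  | succ n ih =>
    rw [Function.iterate_succ_apply', pow_succ', mul_assoc]
    refine (hc _ (memLp_iterate_markovOp h hf _) ?_).trans (by gcongr)
    rw [integral_iterate_markovOp h hf, hf0]

lemma IsReversible.map_swap_compProd [IsFiniteMeasure μ] [IsFiniteKernel κ]
    (h : IsReversible κ μ) : (μ ⊗ₘ κ).map Prod.swap = μ ⊗ₘ κ := by
  refine ext_of_generate_finite _ generateFrom_prod.symm isPiSystem_prod ?_ ?_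
  · rintro _ ⟨A, hA, B, hB, rfl⟩
    rw [Measure.map_apply measurable_swap (hA.prod hB), Set.preimage_swap_prod,
      Measure.compProd_apply_prod hB hA, Measure.compProd_apply_prod hA hB]
    exact h hB hA
  · rw [Measure.map_apply measurable_swap MeasurableSet.univ, Set.preimage_univ]

lemma IsReversible.integral_markovOp_mul [IsFiniteMeasure μ] [IsMarkovKernel κ]
    (h : IsReversible κ μ) {u v : X → ℝ} (hu : MemLp u 2 μ) (hv : MemLp v 2 μ) :
    ∫ x, markovOp κ u x * v x ∂μ = ∫ x, u x * markovOp κ v x ∂μ := by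
  have hfst : (μ ⊗ₘ κ).map Prod.fst = μ := Measure.fst_compProd μ κ
  have hsnd : (μ ⊗ₘ κ).map Prod.snd = μ := (Measure.snd_compProd μ κ).trans h.invariant.def
  have key : ∀ u v : X → ℝ, MemLp u 2 μ → MemLp v 2 μ →
      ∫ x, markovOp κ u x * v x ∂μ = ∫ q, u q.2 * v q.1 ∂(μ ⊗ₘ κ) := by
    intro u v hu hv
    have hu' := (hsnd ▸ hu).comp_of_map measurable_snd.aemeasurable
    have hv' := (hfst ▸ hv).comp_of_map measurable_fst.aemeasurable
    have hint : Integrable (fun q : X × X ↦ u q.2 * v q.1) (μ ⊗ₘ κ) := hu'.integrable_mul hv'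
    rw [Measure.integral_compProd hint]
    simp_rw [integral_mul_const]
    rfl
  have hswap : MeasurePreserving Prod.swap (μ ⊗ₘ κ) (μ ⊗ₘ κ) :=
    ⟨measurable_swap, h.map_swap_compProd⟩
  calc ∫ x, markovOp κ u x * v x ∂μ = ∫ q, v q.2 * u q.1 ∂(μ ⊗ₘ κ) := by
        rw [key u v hu hv, ← hswap.integral_comp MeasurableEquiv.prodComm.measurableEmbedding]
        simp_rw [Prod.fst_swap, Prod.snd_swap, mul_comm]
    _ = ∫ x, u x * markovOp κ v x ∂μ := by
        rw [← key v u hv hu]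
        simp_rw [mul_comm]

lemma IsReversible.sq_toReal_eLpNorm_iterate_le [IsFiniteMeasure μ] [IsMarkovKernel κ]
    (h : IsReversible κ μ) {f : X → ℝ} (hf : MemLp f 2 μ) (k : ℕ) :
    (eLpNorm ((markovOp κ)^[k + 1] f) 2 μ).toReal ^ 2 ≤
      (eLpNorm ((markovOp κ)^[k] f) 2 μ).toReal *
        (eLpNorm ((markovOp κ)^[k + 2] f) 2 μ).toReal := by
  set F : ℕ → X → ℝ := fun j ↦ (markovOp κ)^[j] f
  have hF : ∀ j, MemLp (F j) 2 μ := memLp_iterate_markovOp h.invariant hf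
  have hself : ∫ x, F (k + 1) x * F (k + 1) x ∂μ = ∫ x, F k x * F (k + 2) x ∂μ := by
    have e1 : F (k + 1) = markovOp κ (F k) := Function.iterate_succ_apply' _ _ _
    have e2 : F (k + 2) = markovOp κ (F (k + 1)) := Function.iterate_succ_apply' _ _ _
    calc ∫ x, F (k + 1) x * F (k + 1) x ∂μ = ∫ x, markovOp κ (F k) x * F (k + 1) x ∂μ := by
          rw [← e1]
      _ = ∫ x, F k x * markovOp κ (F (k + 1)) x ∂μ := h.integral_markovOp_mul (hF k) (hF _)
      _ = ∫ x, F k x * F (k + 2) x ∂μ := by rw [← e2]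
  rw [← Lp.norm_toLp (F k) (hF k), ← Lp.norm_toLp (F (k + 1)) (hF _),
    ← Lp.norm_toLp (F (k + 2)) (hF _), ← real_inner_self_eq_norm_sq,
    MemLp.inner_toLp_eq_integral_mul, hself, ← MemLp.inner_toLp_eq_integral_mul]
  exact real_inner_le_norm _ _

lemma IsReversible.normOnMeanZeroLE_of_pow [IsProbabilityMeasure μ] [IsMarkovKernel κ]
    (h : IsReversible κ μ) {c : ℝ} (hc : 0 ≤ c)
    (hpow : ∀ n, 1 ≤ n → (κ ^ (n + 1)).NormOnMeanZeroLE μ (ENNReal.ofReal c ^ n)) :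
    κ.NormOnMeanZeroLE μ (ENNReal.ofReal c) := by
  intro f hf hf0
  have hF := memLp_iterate_markovOp h.invariant hf
  have hbound : ∀ n, 1 ≤ n → (eLpNorm ((markovOp κ)^[n + 1] f) 2 μ).toReal ≤
      c ^ n * (eLpNorm f 2 μ).toReal := by
    intro n hn
    have hn' := hpow n hn f hf hf0
    rw [eLpNorm_congr_ae (markovOp_pow_succ_ae h.invariant (hf.integrable one_le_two) n)] at hn'
    have := ENNReal.toReal_mono (ENNReal.mul_ne_top (by simp) hf.eLpNorm_ne_top) hn'
    rwa [ENNReal.toReal_mul, ENNReal.toReal_pow, ENNReal.toReal_ofReal hc] at this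
  have h1 := le_mul_of_sq_le_mul_of_le_pow_mul
    (a := fun k ↦ (eLpNorm ((markovOp κ)^[k] f) 2 μ).toReal) (fun _ ↦ ENNReal.toReal_nonneg) hc
    (h.sq_toReal_eLpNorm_iterate_le hf) hbound
  change eLpNorm ((markovOp κ)^[1] f) 2 μ ≤ _
  rw [← ENNReal.ofReal_toReal (hF 1).eLpNorm_ne_top, ← ENNReal.ofReal_toReal hf.eLpNorm_ne_top,
    ← ENNReal.ofReal_mul hc]
  exact ENNReal.ofReal_le_ofReal h1

end Endo

section Factorization

lemma invariant_comp_of_comp_eq {μ : Measure X} {ν : Measure Y} {π : Kernel X Y} {τ : Kernel Y X}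
    (hπ : π ∘ₘ μ = ν) (hτ : τ ∘ₘ ν = μ) : Invariant (π ∘ₖ τ) ν := by
  rw [Invariant, ← Measure.comp_assoc, hτ, hπ]

variable {μ : Measure X} {ν : Measure Y} {π : Kernel X Y} {τ : Kernel Y X} [IsMarkovKernel π]
  [IsMarkovKernel τ] [IsProbabilityMeasure μ]

lemma NormOnMeanZeroLE.conj {L : Kernel Y Y} [IsMarkovKernel L] (hπ : π ∘ₘ μ = ν)
    (hτ : τ ∘ₘ ν = μ) (hL : Invariant L ν) {c : ℝ≥0∞} (h : L.NormOnMeanZeroLE ν c) :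
    (τ ∘ₖ (L ∘ₖ π)).NormOnMeanZeroLE μ c := by
  intro f hf hf0
  have : IsProbabilityMeasure ν := hπ ▸ inferInstance
  have hTf : MemLp (markovOp τ f) 2 ν := memLp_markovOp hτ hf
  have hTf0 : ∫ y, markovOp τ f y ∂ν = 0 := by
    rw [integral_markovOp hτ (hf.integrable one_le_two), hf0]
  have hLπ : (L ∘ₖ π) ∘ₘ μ = ν := by rw [← Measure.comp_assoc, hπ, hL.def]
  have hfactor : markovOp (τ ∘ₖ (L ∘ₖ π)) f =ᵐ[μ] markovOp π (markovOp L (markovOp τ f)) := by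
    refine (markovOp_comp_ae ?_).trans (markovOp_comp_ae ?_)
    · rw [← Measure.comp_assoc, hLπ, hτ]
      exact hf.integrable one_le_two
    · rw [hLπ]
      exact hTf.integrable one_le_two
  calc eLpNorm (markovOp (τ ∘ₖ (L ∘ₖ π)) f) 2 μ
      = eLpNorm (markovOp π (markovOp L (markovOp τ f))) 2 μ := eLpNorm_congr_ae hfactor
    _ ≤ eLpNorm (markovOp L (markovOp τ f)) 2 ν :=
        eLpNorm_markovOp_le hπ (memLp_markovOp hL.def hTf).1
    _ ≤ c * eLpNorm (markovOp τ f) 2 ν := h _ hTf hTf0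
    _ ≤ c * eLpNorm f 2 μ := by gcongr; exact eLpNorm_markovOp_le hτ hf.1

lemma NormOnMeanZeroLE.pow_succ_comp (hπ : π ∘ₘ μ = ν) (hτ : τ ∘ₘ ν = μ) {n : ℕ} {c : ℝ≥0∞}
    (h : ((π ∘ₖ τ) ^ n).NormOnMeanZeroLE ν c) : ((τ ∘ₖ π) ^ (n + 1)).NormOnMeanZeroLE μ c := by
  exact comp_pow_succ π τ n ▸ h.conj hπ hτ ((invariant_comp_of_comp_eq hπ hτ).pow n)

lemma IsReversible.normOnMeanZeroLE_of_comp (hrev : IsReversible (τ ∘ₖ π) μ) (hπ : π ∘ₘ μ = ν)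
    (hτ : τ ∘ₘ ν = μ) {c : ℝ} (hc : 0 ≤ c) (h : (π ∘ₖ τ).NormOnMeanZeroLE ν (ENNReal.ofReal c)) :
    (τ ∘ₖ π).NormOnMeanZeroLE μ (ENNReal.ofReal c) := by
  have : IsProbabilityMeasure ν := hπ ▸ inferInstance
  refine hrev.normOnMeanZeroLE_of_pow hc fun n hn ↦ ?_
  obtain ⟨m, rfl⟩ := Nat.exists_eq_add_of_le' hn
  exact (h.pow_succ (invariant_comp_of_comp_eq hπ hτ) m).pow_succ_comp hπ hτ

end Factorization

end ProbabilityTheory.Kernel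

open ProbabilityTheory.Kernel

section AcceptReject

variable {X : Type*} [MeasurableSpace X]

noncomputable def acceptRejectKernel (a : X → X → ℝ) (ha : Measurable (Function.uncurry a)) :
    Kernel (X × X) X where
  toFun q := ENNReal.ofReal (a q.1 q.2) • Measure.dirac q.2 +
    ENNReal.ofReal (1 - a q.1 q.2) • Measure.dirac q.1
  measurable' := by
    refine Measure.measurable_of_measurable_coe _ fun s hs ↦ ?_
    simp only [Measure.add_apply, Measure.smul_apply, Measure.dirac_apply' _ hs, smul_eq_mul]
    have hind : Measurable (s.indicator (1 : X → ℝ≥0∞)) := measurable_one.indicator hs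
    exact (ha.ennreal_ofReal.mul (hind.comp measurable_snd)).add
      ((measurable_const.sub ha).ennreal_ofReal.mul (hind.comp measurable_fst))

variable {a : X → X → ℝ} {ha : Measurable (Function.uncurry a)}

lemma acceptRejectKernel_apply (q : X × X) :
    acceptRejectKernel a ha q = ENNReal.ofReal (a q.1 q.2) • Measure.dirac q.2 +
      ENNReal.ofReal (1 - a q.1 q.2) • Measure.dirac q.1 := rfl

lemma ofReal_mul_add_ofReal_one_sub_mul {t : ℝ} (h0 : 0 ≤ t) (h1 : t ≤ 1) (v : ℝ≥0∞) :
    ENNReal.ofReal t * v + ENNReal.ofReal (1 - t) * v = v := by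
  rw [← add_mul, ← ENNReal.ofReal_add h0 (sub_nonneg.2 h1), add_sub_cancel, ENNReal.ofReal_one,
    one_mul]

lemma isMarkovKernel_acceptRejectKernel (h0 : ∀ x y, 0 ≤ a x y) (h1 : ∀ x y, a x y ≤ 1) :
    IsMarkovKernel (acceptRejectKernel a ha) :=
  ⟨fun q ↦ ⟨by simpa [acceptRejectKernel_apply] using
    ofReal_mul_add_ofReal_one_sub_mul (h0 q.1 q.2) (h1 q.1 q.2) 1⟩⟩

lemma acceptRejectKernel_apply' (q : X × X) {s : Set X} (hs : MeasurableSet s) :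
    acceptRejectKernel a ha q s = ENNReal.ofReal (a q.1 q.2) * s.indicator 1 q.2 +
      ENNReal.ofReal (1 - a q.1 q.2) * s.indicator 1 q.1 := by
  simp [acceptRejectKernel_apply, Measure.dirac_apply' _ hs]

variable {μ : Measure X} {P : Kernel X X}

lemma acceptRejectKernel_comp_compProd [SFinite μ] [IsMarkovKernel P]
    (h0 : ∀ x y, 0 ≤ a x y) (h1 : ∀ x y, a x y ≤ 1)
    (hsym : ∀ F : X × X → ℝ≥0∞, Measurable F →
      ∫⁻ q, ENNReal.ofReal (a q.1 q.2) * F q.swap ∂(μ ⊗ₘ P) =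
        ∫⁻ q, ENNReal.ofReal (a q.1 q.2) * F q ∂(μ ⊗ₘ P)) :
    acceptRejectKernel a ha ∘ₘ (μ ⊗ₘ P) = μ := by
  ext s hs
  have hind : Measurable (s.indicator (1 : X → ℝ≥0∞)) := measurable_one.indicator hs
  rw [Measure.bind_apply hs (Kernel.aemeasurable _)]
  simp_rw [acceptRejectKernel_apply' _ hs]
  have hind₁ : Measurable fun q : X × X ↦ s.indicator (1 : X → ℝ≥0∞) q.1 :=
    hind.comp measurable_fst
  have hind₂ : Measurable fun q : X × X ↦ s.indicator (1 : X → ℝ≥0∞) q.2 :=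
    hind.comp measurable_snd
  have hsnd := hsym _ hind₁
  simp only [Prod.fst_swap] at hsnd
  have hmul : ∀ g : X × X → ℝ≥0∞, Measurable g →
      Measurable fun q : X × X ↦ ENNReal.ofReal (a q.1 q.2) * g q :=
    fun g hg ↦ ha.ennreal_ofReal.mul hg
  rw [lintegral_add_left (hmul _ hind₂), hsnd, ← lintegral_add_left (hmul _ hind₁)]
  calc _ = ∫⁻ q, s.indicator 1 q.1 ∂(μ ⊗ₘ P) :=
        lintegral_congr fun q ↦ ofReal_mul_add_ofReal_one_sub_mul (h0 q.1 q.2) (h1 q.1 q.2) _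
    _ = μ s := by simp [Measure.lintegral_compProd hind₁, lintegral_indicator_one hs]

lemma isReversible_acceptRejectKernel_comp [SFinite μ] [IsSFiniteKernel P]
    (hsym : ∀ F : X × X → ℝ≥0∞, Measurable F →
      ∫⁻ q, ENNReal.ofReal (a q.1 q.2) * F q.swap ∂(μ ⊗ₘ P) =
        ∫⁻ q, ENNReal.ofReal (a q.1 q.2) * F q ∂(μ ⊗ₘ P)) :
    IsReversible (acceptRejectKernel a ha ∘ₖ (Kernel.id ×ₖ P)) μ := by
  have hflow : ∀ A B, MeasurableSet A → MeasurableSet B →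
      ∫⁻ x in A, (acceptRejectKernel a ha ∘ₖ (Kernel.id ×ₖ P)) x B ∂μ =
        ∫⁻ q, ENNReal.ofReal (a q.1 q.2) * (A.indicator 1 q.1 * B.indicator 1 q.2) ∂(μ ⊗ₘ P) +
        ∫⁻ q, ENNReal.ofReal (1 - a q.1 q.2) * (A.indicator 1 q.1 * B.indicator 1 q.1)
          ∂(μ ⊗ₘ P) := by
    intro A B hA hB
    have hτB : Measurable fun q ↦ acceptRejectKernel a ha q B := Kernel.measurable_coe _ hB
    have hindA : Measurable (A.indicator (1 : X → ℝ≥0∞)) := measurable_one.indicator hA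
    have hindB : Measurable (B.indicator (1 : X → ℝ≥0∞)) := measurable_one.indicator hB
    calc ∫⁻ x in A, (acceptRejectKernel a ha ∘ₖ (Kernel.id ×ₖ P)) x B ∂μ
        = ∫⁻ q, A.indicator 1 q.1 * acceptRejectKernel a ha q B ∂(μ ⊗ₘ P) := by
          rw [Measure.lintegral_compProd (by fun_prop), ← lintegral_indicator hA]
          refine lintegral_congr fun x ↦ ?_
          by_cases hx : x ∈ A
          · simp [hx, Kernel.comp_apply' _ _ _ hB, Kernel.lintegral_id_prod hτB]
          · simp [hx]
      _ = _ := by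
          simp_rw [acceptRejectKernel_apply' _ hB, mul_add]
          rw [lintegral_add_left]
          · congr 1 <;> refine lintegral_congr fun q ↦ by ring
          · have := ha.ennreal_ofReal
            fun_prop
  intro A B hA hB
  have hindA : Measurable (A.indicator (1 : X → ℝ≥0∞)) := measurable_one.indicator hA
  have hindB : Measurable (B.indicator (1 : X → ℝ≥0∞)) := measurable_one.indicator hB
  rw [hflow A B hA hB, hflow B A hB hA,
    ← hsym (fun q ↦ B.indicator 1 q.1 * A.indicator 1 q.2) (by fun_prop)]
  simp only [Prod.fst_swap, Prod.snd_swap, mul_comm (A.indicator 1 _)]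

lemma acceptRejectKernel_comp_id_prod_apply [IsFiniteKernel P] (h0 : ∀ x y, 0 ≤ a x y)
    (h1 : ∀ x y, a x y ≤ 1) (x : X) :
    (acceptRejectKernel a ha ∘ₖ (Kernel.id ×ₖ P)) x =
      (P x).withDensity (fun y ↦ ENNReal.ofReal (a x y)) +
        ENNReal.ofReal (∫ y, (1 - a x y) ∂P x) • Measure.dirac x := by
  have hax : Measurable (a x) := ha.comp measurable_prodMk_left
  have hint : Integrable (fun y ↦ 1 - a x y) (P x) :=
    (integrable_const 1).mono' (measurable_const.sub hax).aestronglyMeasurable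
      (ae_of_all _ fun y ↦ by
        rw [Real.norm_eq_abs, abs_le]
        constructor <;> linarith [h0 x y, h1 x y])
  have hrej : Measurable fun y ↦ ENNReal.ofReal (1 - a x y) :=
    (measurable_const.sub hax).ennreal_ofReal
  ext s hs
  rw [Kernel.comp_apply' _ _ _ hs, Kernel.lintegral_id_prod (Kernel.measurable_coe _ hs),
    Measure.add_apply, withDensity_apply _ hs, Measure.smul_apply, Measure.dirac_apply' _ hs,
    smul_eq_mul, ofReal_integral_eq_lintegral_ofReal hint
      (ae_of_all _ fun y ↦ sub_nonneg.2 (h1 x y)), ← lintegral_indicator hs,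
    ← lintegral_mul_const _ hrej, ← lintegral_add_left (hax.ennreal_ofReal.indicator hs)]
  refine lintegral_congr fun y ↦ ?_
  rw [acceptRejectKernel_apply' _ hs]
  by_cases hy : y ∈ s <;> simp [hy]

lemma id_prod_comp_acceptRejectKernel_apply [IsSFiniteKernel P] (x y : X) :
    ((Kernel.id ×ₖ P) ∘ₖ acceptRejectKernel a ha) (x, y) =
      ENNReal.ofReal (a x y) • (Measure.dirac y).prod (P y) +
        ENNReal.ofReal (1 - a x y) • (Measure.dirac x).prod (P x) := by
  simp [Kernel.comp_apply, acceptRejectKernel_apply, Measure.comp_add, Measure.bind_smul,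
    Measure.dirac_bind (Kernel.measurable _), Kernel.prod_apply, Kernel.id_apply]

end AcceptReject

section MetropolisHastings

variable {G : Type*} {ρ : G → ℝ} {p : G → G → ℝ}

noncomputable def mhAcceptance (ρ : G → ℝ) (p : G → G → ℝ) (x y : G) : ℝ :=
  min 1 (if 0 < ρ x * p x y then ρ y * p y x / (ρ x * p x y) else 1)

lemma mhAcceptance_le_one (x y : G) : mhAcceptance ρ p x y ≤ 1 := min_le_left _ _

lemma mhAcceptance_nonneg (hρ0 : ∀ x, 0 ≤ ρ x) (hp0 : ∀ x y, 0 ≤ p x y) (x y : G) :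
    0 ≤ mhAcceptance ρ p x y := by
  unfold mhAcceptance
  split_ifs with h
  · exact le_min zero_le_one (div_nonneg (mul_nonneg (hρ0 y) (hp0 y x)) h.le)
  · exact le_min zero_le_one zero_le_one

lemma mul_mhAcceptance (hρ0 : ∀ x, 0 ≤ ρ x) (hp0 : ∀ x y, 0 ≤ p x y) (x y : G) :
    ρ x * p x y * mhAcceptance ρ p x y = min (ρ x * p x y) (ρ y * p y x) := by
  unfold mhAcceptance
  split_ifs with h
  · rw [mul_min_of_nonneg _ _ h.le, mul_one, mul_div_cancel₀ _ h.ne']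
  · have h0 : ρ x * p x y = 0 := le_antisymm (not_lt.1 h) (mul_nonneg (hρ0 x) (hp0 x y))
    rw [h0, zero_mul, min_eq_left (mul_nonneg (hρ0 y) (hp0 y x))]

variable [MeasurableSpace G]

lemma measurable_mhAcceptance (hρm : Measurable ρ) (hpm : Measurable (Function.uncurry p)) :
    Measurable (Function.uncurry (mhAcceptance ρ p)) := by
  have h1 : Measurable fun q : G × G ↦ ρ q.1 * p q.1 q.2 := (hρm.comp measurable_fst).mul hpm
  have h2 : Measurable fun q : G × G ↦ ρ q.2 * p q.2 q.1 :=
    (hρm.comp measurable_snd).mul (hpm.comp measurable_swap)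
  exact measurable_const.min
    (Measurable.ite (measurableSet_lt measurable_const h1) (h2.div h1) measurable_const)

lemma isProbabilityMeasure_withDensity_ofReal_div {μ₀ : Measure G} (hρ0 : ∀ x, 0 ≤ ρ x)
    (hρint : Integrable ρ μ₀) {Z : ℝ} (hZ : Z = ∫ x, ρ x ∂μ₀) (hZpos : 0 < Z) :
    IsProbabilityMeasure (μ₀.withDensity fun x ↦ ENNReal.ofReal (ρ x / Z)) := by
  constructor
  rw [withDensity_apply _ MeasurableSet.univ, setLIntegral_univ,
    ← ofReal_integral_eq_lintegral_ofReal (hρint.div_const Z)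
      (ae_of_all _ fun x ↦ div_nonneg (hρ0 x) hZpos.le),
    integral_div, ← hZ, div_self hZpos.ne', ENNReal.ofReal_one]

lemma lintegral_withDensity_compProd {μ₀ : Measure G} [SFinite μ₀] {g : G → ℝ≥0∞}
    {h : G → G → ℝ≥0∞} (hg : Measurable g) (hh : Measurable (Function.uncurry h))
    {P : Kernel G G} [IsSFiniteKernel P] (hP : ∀ x, P x = μ₀.withDensity (h x))
    {F : G × G → ℝ≥0∞} (hF : Measurable F) :
    ∫⁻ q, F q ∂((μ₀.withDensity g) ⊗ₘ P) = ∫⁻ x, ∫⁻ y, g x * h x y * F (x, y) ∂μ₀ ∂μ₀ := by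
  rw [Measure.lintegral_compProd hF,
    lintegral_withDensity_eq_lintegral_mul _ hg hF.lintegral_kernel_prod_right']
  refine lintegral_congr fun x ↦ ?_
  have hhx : Measurable (h x) := hh.comp measurable_prodMk_left
  have hFx : Measurable fun y ↦ F (x, y) := hF.comp measurable_prodMk_left
  rw [Pi.mul_apply, hP x, lintegral_withDensity_eq_lintegral_mul _ hhx hFx,
    ← lintegral_const_mul _ (hhx.mul hFx)]
  simp only [Pi.mul_apply, mul_assoc]

lemma lintegral_mhAcceptance_mul_swap {μ₀ : Measure G} [SFinite μ₀] (hρm : Measurable ρ)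
    (hρ0 : ∀ x, 0 ≤ ρ x) (hpm : Measurable (Function.uncurry p)) (hp0 : ∀ x y, 0 ≤ p x y)
    {Z : ℝ} (hZ : 0 ≤ Z) {μ : Measure G}
    (hμ : μ = μ₀.withDensity fun x ↦ ENNReal.ofReal (ρ x / Z)) {P : Kernel G G} [IsSFiniteKernel P]
    (hP : ∀ x, P x = μ₀.withDensity fun y ↦ ENNReal.ofReal (p x y))
    {F : G × G → ℝ≥0∞} (hF : Measurable F) :
    ∫⁻ q, ENNReal.ofReal (mhAcceptance ρ p q.1 q.2) * F q.swap ∂(μ ⊗ₘ P) =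
      ∫⁻ q, ENNReal.ofReal (mhAcceptance ρ p q.1 q.2) * F q ∂(μ ⊗ₘ P) := by
  subst hμ
  have hA := (measurable_mhAcceptance hρm hpm).ennreal_ofReal
  have hflux : ∀ x y, ENNReal.ofReal (ρ x / Z) * ENNReal.ofReal (p x y) *
      ENNReal.ofReal (mhAcceptance ρ p x y) =
        ENNReal.ofReal (min (ρ x * p x y) (ρ y * p y x) / Z) := by
    intro x y
    have hρZ : 0 ≤ ρ x / Z := div_nonneg (hρ0 x) hZ
    rw [← ENNReal.ofReal_mul hρZ, ← ENNReal.ofReal_mul (mul_nonneg hρZ (hp0 x y)),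
      ← mul_mhAcceptance hρ0 hp0]
    ring_nf
  have hρZ : Measurable fun x ↦ ENNReal.ofReal (ρ x / Z) := (hρm.div_const Z).ennreal_ofReal
  have hp : Measurable (Function.uncurry fun x y ↦ ENNReal.ofReal (p x y)) := hpm.ennreal_ofReal
  have hF₁ : Measurable fun q : G × G ↦ ENNReal.ofReal (mhAcceptance ρ p q.1 q.2) * F q.swap :=
    hA.mul (hF.comp measurable_swap)
  have hF₂ : Measurable fun q : G × G ↦ ENNReal.ofReal (mhAcceptance ρ p q.1 q.2) * F q :=
    hA.mul hF
  rw [lintegral_withDensity_compProd hρZ hp hP hF₁, lintegral_withDensity_compProd hρZ hp hP hF₂,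
    lintegral_lintegral_swap (by fun_prop)]
  refine lintegral_congr fun x ↦ lintegral_congr fun y ↦ ?_
  simp only [Prod.swap_prod_mk, ← mul_assoc, hflux, min_comm]

end MetropolisHastings

theorem norm_comparisons_K_Kaug_general
    {G : Type*} [MeasurableSpace G]
    (μ₀ : Measure G) [SigmaFinite μ₀]
    (ρ : G → ℝ) (hρm : Measurable ρ) (hρ0 : ∀ x, 0 ≤ ρ x) (hρint : Integrable ρ μ₀)
    (Z : ℝ) (hZ : Z = ∫ x, ρ x ∂μ₀) (hZpos : 0 < Z)
    (μ : Measure G)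
    (hμ : μ = μ₀.withDensity fun x => ENNReal.ofReal (ρ x / Z))
    (P : Kernel G G) [IsMarkovKernel P]
    (p : G → G → ℝ) (hpm : Measurable (Function.uncurry p)) (hp0 : ∀ x y, 0 ≤ p x y)
    (hP : ∀ x, P x = μ₀.withDensity fun y => ENNReal.ofReal (p x y))
    (r : G → G → ℝ)
    (hr : ∀ x y, r x y = if 0 < ρ x * p x y then ρ y * p y x / (ρ x * p x y) else 1)
    (α : G → G → ℝ) (hα : ∀ x y, α x y = min 1 (r x y))
    (K : Kernel G G)
    (hK : ∀ x, K x = (P x).withDensity (fun y => ENNReal.ofReal (α x y)) +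
      ENNReal.ofReal (∫ y, (1 - α x y) ∂(P x)) • Measure.dirac x)
    (Kaug : Kernel (G × G) (G × G))
    (hKaug : ∀ x y, Kaug (x, y) =
      ENNReal.ofReal (α x y) • ((Measure.dirac y).prod (P y)) +
      ENNReal.ofReal (1 - α x y) • ((Measure.dirac x).prod (P x)))
    (ν : Measure (G × G)) (hν : ν = μ.compProd P)
    (KP : ℕ → Kernel G G) (hKP1 : KP 1 = K)
    (hKPs : ∀ n, 1 ≤ n → KP (n + 1) = K ∘ₖ KP n)
    (KaugP : ℕ → Kernel (G × G) (G × G)) (hKaugP1 : KaugP 1 = Kaug)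
    (hKaugPs : ∀ n, 1 ≤ n → KaugP (n + 1) = Kaug ∘ₖ KaugP n) :
    -- ‖Kⁿ‖ ≤ ‖K_aug^{n-1}‖ for n ≥ 2
    (∀ n, 2 ≤ n → ∀ c : ℝ, 0 ≤ c →
      (∀ g : G × G → ℝ, MemLp g 2 ν → ∫ q, g q ∂ν = 0 →
        eLpNorm (fun q => ∫ u, g u ∂(KaugP (n - 1) q)) 2 ν ≤
          ENNReal.ofReal c * eLpNorm g 2 ν) →
      (∀ f : G → ℝ, MemLp f 2 μ → ∫ x, f x ∂μ = 0 →
        eLpNorm (fun x => ∫ z, f z ∂(KP n x)) 2 μ ≤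
          ENNReal.ofReal c * eLpNorm f 2 μ)) ∧
    -- ‖K_augⁿ‖ ≤ ‖K^{n-1}‖ for n ≥ 2
    (∀ n, 2 ≤ n → ∀ c : ℝ, 0 ≤ c →
      (∀ f : G → ℝ, MemLp f 2 μ → ∫ x, f x ∂μ = 0 →
        eLpNorm (fun x => ∫ z, f z ∂(KP (n - 1) x)) 2 μ ≤
          ENNReal.ofReal c * eLpNorm f 2 μ) →
      (∀ g : G × G → ℝ, MemLp g 2 ν → ∫ q, g q ∂ν = 0 →
        eLpNorm (fun q => ∫ u, g u ∂(KaugP n q)) 2 ν ≤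
          ENNReal.ofReal c * eLpNorm g 2 ν)) ∧
    -- ‖K‖ ≤ ‖K_aug‖
    (∀ c : ℝ, 0 ≤ c →
      (∀ g : G × G → ℝ, MemLp g 2 ν → ∫ q, g q ∂ν = 0 →
        eLpNorm (fun q => ∫ u, g u ∂(Kaug q)) 2 ν ≤
          ENNReal.ofReal c * eLpNorm g 2 ν) →
      (∀ f : G → ℝ, MemLp f 2 μ → ∫ x, f x ∂μ = 0 →
        eLpNorm (fun x => ∫ z, f z ∂(K x)) 2 μ ≤
          ENNReal.ofReal c * eLpNorm f 2 μ)) ∧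
    -- spectral radius of K_aug is at most ‖K‖
    (∀ c : ℝ, 0 ≤ c →
      (∀ f : G → ℝ, MemLp f 2 μ → ∫ x, f x ∂μ = 0 →
        eLpNorm (fun x => ∫ z, f z ∂(K x)) 2 μ ≤
          ENNReal.ofReal c * eLpNorm f 2 μ) →
      (∀ n, 2 ≤ n → ∀ g : G × G → ℝ, MemLp g 2 ν → ∫ q, g q ∂ν = 0 →
        eLpNorm (fun q => ∫ u, g u ∂(KaugP n q)) 2 ν ≤
          ENNReal.ofReal (c ^ (n - 1)) * eLpNorm g 2 ν)) := by
  obtain rfl : α = mhAcceptance ρ p := by ext x y; rw [hα, hr]; rfl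
  subst hν
  have hA0 := mhAcceptance_nonneg hρ0 hp0
  have : IsProbabilityMeasure μ :=
    hμ ▸ isProbabilityMeasure_withDensity_ofReal_div hρ0 hρint hZ hZpos
  set τ := acceptRejectKernel (mhAcceptance ρ p) (measurable_mhAcceptance hρm hpm)
  have : IsMarkovKernel τ := isMarkovKernel_acceptRejectKernel hA0 mhAcceptance_le_one
  set π : Kernel G (G × G) := Kernel.id ×ₖ P
  have hπ : π ∘ₘ μ = μ ⊗ₘ P := (Measure.compProd_eq_comp_prod μ P).symm
  have hsym := fun F hF ↦ lintegral_mhAcceptance_mul_swap hρm hρ0 hpm hp0 hZpos.le hμ hP (F := F) hF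
  have hτ : τ ∘ₘ (μ ⊗ₘ P) = μ := acceptRejectKernel_comp_compProd hA0 mhAcceptance_le_one hsym
  have hrev : IsReversible (τ ∘ₖ π) μ := isReversible_acceptRejectKernel_comp hsym
  obtain rfl : K = τ ∘ₖ π := Kernel.ext fun x ↦
    (hK x).trans (acceptRejectKernel_comp_id_prod_apply hA0 mhAcceptance_le_one x).symm
  obtain rfl : Kaug = π ∘ₖ τ := Kernel.ext fun q ↦
    (hKaug q.1 q.2).trans (id_prod_comp_acceptRejectKernel_apply q.1 q.2).symm
  have hKP := eq_pow_of_succ_eq_comp hKP1 hKPs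
  have hKaugP := eq_pow_of_succ_eq_comp hKaugP1 hKaugPs
  refine ⟨fun n hn c _ h ↦ ?_, fun n hn c _ h ↦ ?_, fun c hc h ↦ ?_, fun c hc h n hn ↦ ?_⟩
  · obtain ⟨m, rfl⟩ := Nat.exists_eq_add_of_le' hn
    rw [show m + 2 - 1 = m + 1 by omega, hKaugP _ (by omega)] at h
    rw [hKP _ (by omega)]
    exact NormOnMeanZeroLE.pow_succ_comp hπ hτ h
  · obtain ⟨m, rfl⟩ := Nat.exists_eq_add_of_le' hn
    rw [show m + 2 - 1 = m + 1 by omega, hKP _ (by omega)] at h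
    rw [hKaugP _ (by omega)]
    exact NormOnMeanZeroLE.pow_succ_comp hτ hπ h
  · exact hrev.normOnMeanZeroLE_of_comp hπ hτ hc h
  · obtain ⟨m, rfl⟩ := Nat.exists_eq_add_of_le' hn
    rw [show m + 2 - 1 = m + 1 by omega, hKaugP _ (by omega), ENNReal.ofReal_pow hc]
    exact (NormOnMeanZeroLE.pow_succ h hrev.invariant m).pow_succ_comp hτ hπ

/-- Norm comparisons between the MH operator K on L²₀(μ) and the
augmented operator K_aug on L²₀(ν), expressed via the least-bound characterization
of operator norms: for n ≥ 2, ‖Kⁿ‖ ≤ ‖K_aug^{n-1}‖ and ‖K_augⁿ‖ ≤ ‖K^{n-1}‖;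
moreover ‖K‖ ≤ ‖K_aug‖ and the spectral radius of K_aug is at most ‖K‖
(i.e. ‖K_augⁿ‖ ≤ ‖K‖^{n-1} for any upper bound of ‖K‖). -/
theorem norm_comparisons_K_Kaug
    {G : Type*} [MeasurableSpace G]
    (μ₀ : Measure G) [SigmaFinite μ₀]
    (ρ : G → ℝ) (hρm : Measurable ρ) (hρ0 : ∀ x, 0 ≤ ρ x) (hρint : Integrable ρ μ₀)
    (Z : ℝ) (hZ : Z = ∫ x, ρ x ∂μ₀) (hZpos : 0 < Z)
    (μ : Measure G) [SFinite μ]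
    (hμ : μ = μ₀.withDensity fun x => ENNReal.ofReal (ρ x / Z))
    (P : Kernel G G) [IsMarkovKernel P]
    (p : G → G → ℝ) (hpm : Measurable (Function.uncurry p)) (hp0 : ∀ x y, 0 ≤ p x y)
    (hP : ∀ x, P x = μ₀.withDensity fun y => ENNReal.ofReal (p x y))
    (hpos : ∀ x y, 0 < ρ y → 0 < p x y)
    (bar : G → G → ℝ) (hbar : ∀ x y, bar x y = if 0 < ρ y then ρ y / p x y else 0)
    (r : G → G → ℝ)
    (hr : ∀ x y, r x y = if 0 < ρ x * p x y then ρ y * p y x / (ρ x * p x y) else 1)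
    (α : G → G → ℝ) (hα : ∀ x y, α x y = min 1 (r x y))
    (K : Kernel G G) [IsMarkovKernel K]
    (hK : ∀ x, K x = (P x).withDensity (fun y => ENNReal.ofReal (α x y)) +
      ENNReal.ofReal (∫ y, (1 - α x y) ∂(P x)) • Measure.dirac x)
    (Kaug : Kernel (G × G) (G × G)) [IsMarkovKernel Kaug]
    (hKaug : ∀ x y, Kaug (x, y) =
      ENNReal.ofReal (α x y) • ((Measure.dirac y).prod (P y)) +
      ENNReal.ofReal (1 - α x y) • ((Measure.dirac x).prod (P x)))
    (ν : Measure (G × G)) (hν : ν = μ.compProd P)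
    (KP : ℕ → Kernel G G) (hKP1 : KP 1 = K)
    (hKPs : ∀ n, 1 ≤ n → KP (n + 1) = K ∘ₖ KP n)
    (KaugP : ℕ → Kernel (G × G) (G × G)) (hKaugP1 : KaugP 1 = Kaug)
    (hKaugPs : ∀ n, 1 ≤ n → KaugP (n + 1) = Kaug ∘ₖ KaugP n) :
    -- ‖Kⁿ‖ ≤ ‖K_aug^{n-1}‖ for n ≥ 2
    (∀ n, 2 ≤ n → ∀ c : ℝ, 0 ≤ c →
      (∀ g : G × G → ℝ, MemLp g 2 ν → ∫ q, g q ∂ν = 0 →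
        eLpNorm (fun q => ∫ u, g u ∂(KaugP (n - 1) q)) 2 ν ≤
          ENNReal.ofReal c * eLpNorm g 2 ν) →
      (∀ f : G → ℝ, MemLp f 2 μ → ∫ x, f x ∂μ = 0 →
        eLpNorm (fun x => ∫ z, f z ∂(KP n x)) 2 μ ≤
          ENNReal.ofReal c * eLpNorm f 2 μ)) ∧
    -- ‖K_augⁿ‖ ≤ ‖K^{n-1}‖ for n ≥ 2
    (∀ n, 2 ≤ n → ∀ c : ℝ, 0 ≤ c →
      (∀ f : G → ℝ, MemLp f 2 μ → ∫ x, f x ∂μ = 0 →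
        eLpNorm (fun x => ∫ z, f z ∂(KP (n - 1) x)) 2 μ ≤
          ENNReal.ofReal c * eLpNorm f 2 μ) →
      (∀ g : G × G → ℝ, MemLp g 2 ν → ∫ q, g q ∂ν = 0 →
        eLpNorm (fun q => ∫ u, g u ∂(KaugP n q)) 2 ν ≤
          ENNReal.ofReal c * eLpNorm g 2 ν)) ∧
    -- ‖K‖ ≤ ‖K_aug‖
    (∀ c : ℝ, 0 ≤ c →
      (∀ g : G × G → ℝ, MemLp g 2 ν → ∫ q, g q ∂ν = 0 →
        eLpNorm (fun q => ∫ u, g u ∂(Kaug q)) 2 ν ≤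
          ENNReal.ofReal c * eLpNorm g 2 ν) →
      (∀ f : G → ℝ, MemLp f 2 μ → ∫ x, f x ∂μ = 0 →
        eLpNorm (fun x => ∫ z, f z ∂(K x)) 2 μ ≤
          ENNReal.ofReal c * eLpNorm f 2 μ)) ∧
    -- spectral radius of K_aug is at most ‖K‖
    (∀ c : ℝ, 0 ≤ c →
      (∀ f : G → ℝ, MemLp f 2 μ → ∫ x, f x ∂μ = 0 →
        eLpNorm (fun x => ∫ z, f z ∂(K x)) 2 μ ≤
          ENNReal.ofReal c * eLpNorm f 2 μ) →
      (∀ n, 2 ≤ n → ∀ g : G × G → ℝ, MemLp g 2 ν → ∫ q, g q ∂ν = 0 →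
        eLpNorm (fun q => ∫ u, g u ∂(KaugP n q)) 2 ν ≤
          ENNReal.ofReal (c ^ (n - 1)) * eLpNorm g 2 ν)) :=
  norm_comparisons_K_Kaug_general μ₀ ρ hρm hρ0 hρint Z hZ hZpos μ hμ P p hpm hp0 hP r hr α hα K hK
    Kaug hKaug ν hν KP hKP1 hKPs KaugP hKaugP1 hKaugPs
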